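/- arXiv:2406.07802 — 2 statements merged into one kernel-verified Lean document; each statement's English description precedes it below -/
import Mathlib

section
/- For every n, a graph G is n-edge bottlenecked if and only if every minor of G is n-edge bottlenecked. -/
/-!
Lift connected sets `X, Y` of a minor `H` to the unions `X', Y'` of their branch sets in `G`.
A bottleneck between `X'` and `Y'` may cut through branch sets, but a maximal (Zorn) side `A ⊇ X'`
of a bottleneck of at most `n` edges cannot: it contains every branch set it meets. Then the edges
of `H` leaving the branch sets inside `A` are images of the at most `n` edges leaving `A`.
Conversely, `G` is a minor of itself.
-/

open SimpleGraph

variable {V : Type}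

/-- A set of vertices is connected if the induced subgraph is connected. -/
def ConnSet (G : SimpleGraph V) (X : Set V) : Prop := (G.induce X).Connected

/-- `G` is `n`-edge bottlenecked: any two disjoint connected vertex sets `X,Y`
admit a set of at most `n` edges meeting every `X,Y` path. -/
def EdgeBottlenecked (G : SimpleGraph V) (n : ℕ) : Prop :=
  ∀ X Y : Set V, Disjoint X Y → ConnSet G X → ConnSet G Y →
    ∃ S : Finset (Sym2 V), S.card ≤ n ∧
      ∀ ⦃x y : V⦄ (p : G.Walk x y), x ∈ X → y ∈ Y → p.IsPath → ∃ e ∈ S, e ∈ p.edges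

/-- `G` is `n`-point bottlenecked: any two disjoint connected vertex sets `X,Y`
admit a set of at most `n` vertices meeting every `X,Y` path. -/
def PointBottlenecked (G : SimpleGraph V) (n : ℕ) : Prop :=
  ∀ X Y : Set V, Disjoint X Y → ConnSet G X → ConnSet G Y →
    ∃ S : Finset V, S.card ≤ n ∧
      ∀ ⦃x y : V⦄ (p : G.Walk x y), x ∈ X → y ∈ Y → p.IsPath → ∃ v ∈ S, v ∈ p.support

/-- An `n`-ladder: two disjoint connected poles `X,Y` and `n` rungs, i.e. `X,Y`
paths that are pairwise disjoint outside of `X ∪ Y`. -/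
structure Ladder (G : SimpleGraph V) (n : ℕ) where
  X : Set V
  Y : Set V
  disj : Disjoint X Y
  connX : ConnSet G X
  connY : ConnSet G Y
  a : Fin n → V
  b : Fin n → V
  ha : ∀ i, a i ∈ X
  hb : ∀ i, b i ∈ Y
  p : (i : Fin n) → G.Walk (a i) (b i)
  isPath : ∀ i, (p i).IsPath
  rungsDisj : ∀ i j, i ≠ j → ∀ v, v ∈ (p i).support → v ∈ (p j).support → v ∈ X ∪ Y

/-- `G` contains the dipole `D_k` as a minor: equivalently, `G` contains a `k`-ladder. -/
def HasDipoleMinor (G : SimpleGraph V) (k : ℕ) : Prop := Nonempty (Ladder G k)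

/-- Two vertex sets are `M`-disjoint if every pair of points (one from each) is at
graph distance at least `M`. -/
def MDisjoint (G : SimpleGraph V) (M : ℕ) (X Y : Set V) : Prop :=
  ∀ x ∈ X, ∀ y ∈ Y, M ≤ G.dist x y

/-- `G` is `M`-fat `n`-bottlenecked: any two connected `M`-disjoint sets `X,Y` admit
at most `n` vertices (outside `X ∪ Y`) whose open `M`-neighborhood meets every `X,Y` path. -/
def FatBottlenecked (G : SimpleGraph V) (M n : ℕ) : Prop :=
  ∀ X Y : Set V, ConnSet G X → ConnSet G Y → MDisjoint G M X Y →
    ∃ S : Finset V, S.card ≤ n ∧ (∀ s ∈ S, s ∉ X ∪ Y) ∧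
      ∀ ⦃x y : V⦄ (p : G.Walk x y), x ∈ X → y ∈ Y → p.IsPath →
        ∃ v ∈ p.support, ∃ s ∈ S, G.dist v s < M

/-- An `M`-fat `n`-ladder: an `n`-ladder whose poles are `M`-disjoint and whose
rungs are pairwise `M`-disjoint. -/
structure FatLadder (G : SimpleGraph V) (M n : ℕ) extends Ladder G n where
  polesFat : MDisjoint G M X Y
  rungsFat : ∀ i j, i ≠ j → ∀ u v, u ∈ (p i).support → v ∈ (p j).support → M ≤ G.dist u v

/-- `H` is a minor of `G`: branch sets in `G` (nonempty, connected, pairwise disjoint)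
realize the vertices of `H`, and every edge of `H` is realized by an edge of `G`. -/
def IsMinor {W : Type} (G : SimpleGraph V) (H : SimpleGraph W) : Prop :=
  ∃ B : W → Set V, (∀ w, (B w).Nonempty) ∧ (∀ w, ConnSet G (B w)) ∧
    (∀ w w', w ≠ w' → Disjoint (B w) (B w')) ∧
    (∀ ⦃w w'⦄, H.Adj w w' → ∃ u ∈ B w, ∃ v ∈ B w', G.Adj u v)

/-- `H` is an `M`-fat minor of `G`: a minor whose branch sets are pairwise `M`-disjoint
except where incident (adjacent) in `H`. -/
def IsFatMinor (G : SimpleGraph V) (M : ℕ) {W : Type} (H : SimpleGraph W) : Prop :=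
  ∃ B : W → Set V, (∀ w, (B w).Nonempty) ∧ (∀ w, ConnSet G (B w)) ∧
    (∀ w w', w ≠ w' → Disjoint (B w) (B w')) ∧
    (∀ w w', w ≠ w' → ¬ H.Adj w w' → MDisjoint G M (B w) (B w')) ∧
    (∀ ⦃w w'⦄, H.Adj w w' → ∃ u ∈ B w, ∃ v ∈ B w', G.Adj u v)

open Set

lemma Set.encard_le_coe_of_forall_finite_subset {α : Type*} {s : Set α} {n : ℕ}
    (h : ∀ t ⊆ s, t.Finite → t.encard ≤ n) : s.encard ≤ n := by
  by_contra! hlt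
  obtain ⟨t, hts, ht⟩ := exists_subset_encard_eq (Order.add_one_le_of_lt hlt)
  have hfin : t.Finite := finite_of_encard_eq_coe ht
  have := h t hts hfin
  rw [ht] at this
  norm_cast at this
  omega

lemma Set.exists_finset_card_le_of_encard_le {α : Type*} {s : Set α} {n : ℕ}
    (h : s.encard ≤ n) : ∃ S : Finset α, S.card ≤ n ∧ s ⊆ S := by
  have hfin := finite_of_encard_le_coe h
  refine ⟨hfin.toFinset, ?_, hfin.coe_toFinset.superset⟩
  rwa [hfin.encard_eq_coe_toFinset_card, Nat.cast_le] at h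

namespace SimpleGraph

section EdgeBoundary

variable {α : Type*} {G : SimpleGraph α}

def edgeBoundary (G : SimpleGraph α) (A : Set α) : Set (Sym2 α) :=
  {e | ∃ u ∈ A, ∃ v ∉ A, G.Adj u v ∧ s(u, v) = e}

lemma mk_mem_edgeBoundary {A : Set α} {u v : α} (huv : G.Adj u v) (hu : u ∈ A) (hv : v ∉ A) :
    s(u, v) ∈ G.edgeBoundary A :=
  ⟨u, hu, v, hv, huv, rfl⟩

lemma Walk.exists_mem_edgeBoundary {A : Set α} {u v : α} (p : G.Walk u v) (hu : u ∈ A)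
    (hv : v ∉ A) : ∃ e ∈ G.edgeBoundary A, e ∈ p.edges := by
  obtain ⟨d, hd, hfst, hsnd⟩ := p.exists_boundary_dart A hu hv
  exact ⟨d.edge, mk_mem_edgeBoundary d.adj hfst hsnd,
    p.edges_eq_map_darts ▸ List.mem_map_of_mem hd⟩

lemma edgeBoundary_inter_subset {A B C : Set α} (hAB : A ⊆ B) (hBC : B ⊆ C) :
    G.edgeBoundary A ∩ G.edgeBoundary C ⊆ G.edgeBoundary B := by
  rintro _ ⟨⟨u, hu, v, hv, huv, rfl⟩, ⟨u', -, v', hv', -, he⟩⟩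
  refine mk_mem_edgeBoundary huv (hAB hu) fun hvB => hv' ?_
  rcases Sym2.eq_iff.mp he with ⟨-, rfl⟩ | ⟨-, rfl⟩
  exacts [hBC hvB, hBC (hAB hu)]

/-- A finite part of the boundary of the union of a chain already lies in the boundary of
one of its members, since the outer ends of its edges avoid every member. -/
lemma encard_edgeBoundary_sUnion_le {c : Set (Set α)} (hc : IsChain (· ⊆ ·) c)
    (hne : c.Nonempty) {n : ℕ} (h : ∀ A ∈ c, (G.edgeBoundary A).encard ≤ n) :
    (G.edgeBoundary (⋃₀ c)).encard ≤ n := by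
  set f : Set α → Set (Sym2 α) := fun A => G.edgeBoundary A ∩ G.edgeBoundary (⋃₀ c)
  have hmono : ∀ A ∈ c, ∀ B ∈ c, A ⊆ B → f A ⊆ f B := fun A _ B hB hAB =>
    subset_inter (edgeBoundary_inter_subset hAB (subset_sUnion_of_mem hB)) inter_subset_right
  have hdir : DirectedOn (fun A B => f A ⊆ f B) c := fun A hA B hB =>
    (hc.total hA hB).elim (fun hAB => ⟨B, hB, hmono A hA B hB hAB, subset_rfl⟩)
      (fun hBA => ⟨A, hA, subset_rfl, hmono B hB A hA hBA⟩)
  refine encard_le_coe_of_forall_finite_subset fun T hT hfin => ?_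
  have hcover : ((hfin.toFinset : Finset (Sym2 α)) : Set (Sym2 α)) ⊆ ⋃ A ∈ c, f A := by
    rw [hfin.coe_toFinset]
    rintro _ he
    obtain ⟨u, ⟨A, hA, hu⟩, v, hv, huv, rfl⟩ := hT he
    exact mem_biUnion hA ⟨mk_mem_edgeBoundary huv hu fun hvA => hv ⟨A, hA, hvA⟩, hT he⟩
  obtain ⟨A, hA, hTA⟩ := hdir.exists_mem_subset_of_finset_subset_biUnion hne hcover
  rw [hfin.coe_toFinset] at hTA
  exact (encard_le_encard (hTA.trans inter_subset_left)).trans (h A hA)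

end EdgeBoundary

end SimpleGraph

section Connectivity

variable {G : SimpleGraph V}

lemma connSet_singleton (v : V) : ConnSet G {v} := by
  rw [ConnSet, induce_singleton_eq_top]
  exact connected_top

lemma ConnSet.union_iUnion {ι : Type*} {A : Set V} {t : ι → Set V} (hA : ConnSet G A)
    (ht : ∀ i, ConnSet G (t i)) (hmeet : ∀ i, (t i ∩ A).Nonempty) :
    ConnSet G (A ∪ ⋃ i, t i) := by
  obtain ⟨⟨u, hu⟩⟩ := hA.nonempty
  refine induce_connected_of_patches u (Or.inl hu) fun {v} hv => ?_
  rcases hv with hv | hv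
  · exact ⟨A, subset_union_left, hu, hv, hA.preconnected _ _⟩
  · obtain ⟨i, hvi⟩ := mem_iUnion.mp hv
    refine ⟨A ∪ t i, union_subset_union_right A (subset_iUnion t i), Or.inl hu, Or.inr hvi, ?_⟩
    exact (induce_union_connected hA.preconnected (ht i).preconnected
      (inter_comm (t i) A ▸ hmeet i)).preconnected _ _

lemma ConnSet.biUnion_of_branchSets {W : Type} {H : SimpleGraph W} {B : W → Set V}
    (hB : ∀ w, ConnSet G (B w)) (hadj : ∀ ⦃w w'⦄, H.Adj w w' → ∃ u ∈ B w, ∃ v ∈ B w', G.Adj u v)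
    {X : Set W} (hX : ConnSet H X) : ConnSet G (⋃ w ∈ X, B w) := by
  set X' := ⋃ w ∈ X, B w
  have hsub : ∀ w ∈ X, B w ⊆ X' := fun w hw => subset_biUnion_of_mem hw
  have within : ∀ w (hw : w ∈ X) u (hu : u ∈ B w) v (hv : v ∈ B w),
      (G.induce X').Reachable ⟨u, hsub w hw hu⟩ ⟨v, hsub w hw hv⟩ := fun w hw u hu v hv =>
    ((hB w).preconnected ⟨u, hu⟩ ⟨v, hv⟩).map (induceHomOfLE G (hsub w hw)).toHom
  have across : ∀ a b : X, (H.induce X).Reachable a b → ∀ u (hu : u ∈ B a) v (hv : v ∈ B b),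
      (G.induce X').Reachable ⟨u, hsub a a.2 hu⟩ ⟨v, hsub b b.2 hv⟩ := by
    intro a b hab
    rw [reachable_iff_reflTransGen] at hab
    induction hab with
    | refl => exact within a a.2
    | @tail c b _ hcb ih =>
      intro u hu v hv
      obtain ⟨u₁, hu₁, v₁, hv₁, huv₁⟩ := hadj hcb
      have hstep : (G.induce X').Reachable ⟨u₁, hsub c c.2 hu₁⟩ ⟨v₁, hsub b b.2 hv₁⟩ :=
        Adj.reachable huv₁
      exact ((ih u hu u₁ hu₁).trans hstep).trans (within b b.2 v₁ hv₁ v hv)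
  obtain ⟨⟨w₀, hw₀⟩⟩ := hX.nonempty
  obtain ⟨⟨u₀, hu₀⟩⟩ := (hB w₀).nonempty
  rw [ConnSet, connected_iff_exists_forall_reachable]
  refine ⟨⟨u₀, hsub w₀ hw₀ hu₀⟩, ?_⟩
  rintro ⟨v, hv⟩
  obtain ⟨w, hw, hvw⟩ := mem_iUnion₂.mp hv
  exact across ⟨w₀, hw₀⟩ ⟨w, hw⟩ (hX.preconnected _ _) u₀ hu₀ v hvw

end Connectivity

section Bottleneck

variable {G : SimpleGraph V} {n : ℕ}

lemma EdgeBottlenecked.of_forall_exists_edgeBoundary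
    (h : ∀ X Y : Set V, Disjoint X Y → ConnSet G X → ConnSet G Y →
      ∃ A, X ⊆ A ∧ Disjoint A Y ∧ (G.edgeBoundary A).encard ≤ n) :
    EdgeBottlenecked G n := by
  intro X Y hXY hX hY
  obtain ⟨A, hXA, hAY, hA⟩ := h X Y hXY hX hY
  obtain ⟨S, hcard, hS⟩ := exists_finset_card_le_of_encard_le hA
  refine ⟨S, hcard, fun x y p hx hy _ => ?_⟩
  obtain ⟨e, he, hep⟩ := p.exists_mem_edgeBoundary (hXA hx) (disjoint_right.mp hAY hy)
  exact ⟨e, hS he, hep⟩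

/-- The side of a bottleneck containing `D` is everything reachable from `D` without crossing
the cut. -/
lemma EdgeBottlenecked.exists_superset (hG : EdgeBottlenecked G n) {D Y : Set V}
    (hDY : Disjoint D Y) (hD : ConnSet G D) (hY : ConnSet G Y) :
    ∃ A, D ⊆ A ∧ ConnSet G A ∧ Disjoint A Y ∧ (G.edgeBoundary A).encard ≤ n := by
  classical
  obtain ⟨S, hcard, hcut⟩ := hG D Y hDY hD hY
  set G' := G.deleteEdges S
  set A := {v | ∃ u ∈ D, G'.Reachable u v}
  have hDA : D ⊆ A := fun u hu => ⟨u, hu, .refl u⟩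
  refine ⟨A, hDA, ?_, ?_, ?_⟩
  · obtain ⟨⟨u₀, hu₀⟩⟩ := hD.nonempty
    refine induce_connected_of_patches u₀ (hDA hu₀) fun {v} ⟨u, hu, ⟨p⟩⟩ => ?_
    set q := p.mapLe (deleteEdges_le _)
    have hqA : {x | x ∈ q.support} ⊆ A := fun x hx => by
      rw [mem_ofPred_eq, Walk.support_mapLe_eq_support] at hx
      exact ⟨u, hu, ⟨p.takeUntil x hx⟩⟩
    refine ⟨D ∪ {x | x ∈ q.support}, union_subset hDA hqA, Or.inl hu₀,
      Or.inr q.end_mem_support, ?_⟩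
    exact (induce_union_connected hD.preconnected q.connected_induce_support.preconnected
      ⟨u, hu, q.start_mem_support⟩).preconnected _ _
  · refine disjoint_right.mpr fun v hvY ⟨u, hu, ⟨p⟩⟩ => ?_
    obtain ⟨e, heS, hep⟩ := hcut (p.bypass.mapLe (deleteEdges_le _)) hu hvY
      (p.bypass_isPath.mapLe _)
    rw [Walk.edges_mapLe_eq_edges] at hep
    have := p.bypass.edges_subset_edgeSet hep
    rw [edgeSet_deleteEdges] at this
    exact this.2 heS
  · have hbd : G.edgeBoundary A ⊆ S := by
      rintro _ ⟨u, ⟨u₀, hu₀, hr⟩, v, hv, huv, rfl⟩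
      by_contra heS
      exact hv ⟨u₀, hu₀, hr.trans (Adj.reachable (deleteEdges_adj.mpr ⟨huv, heS⟩))⟩
    calc (G.edgeBoundary A).encard ≤ (S : Set (Sym2 V)).encard := encard_le_encard hbd
      _ ≤ n := by rw [encard_coe_eq_coe_finsetCard]; exact_mod_cast hcard

lemma EdgeBottlenecked.exists_saturated_superset (hG : EdgeBottlenecked G n) {ι : Type*}
    {t : ι → Set V} (ht : ∀ i, ConnSet G (t i)) {X Y : Set V}
    (htY : ∀ i, Disjoint (t i) Y ∨ t i ⊆ Y) (hXY : Disjoint X Y) (hX : ConnSet G X)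
    (hY : ConnSet G Y) :
    ∃ A, X ⊆ A ∧ Disjoint A Y ∧ (G.edgeBoundary A).encard ≤ n ∧
      ∀ i, (t i ∩ A).Nonempty → t i ⊆ A := by
  set 𝒜 : Set (Set V) :=
    {A | X ⊆ A ∧ ConnSet G A ∧ Disjoint A Y ∧ (G.edgeBoundary A).encard ≤ n}
  have hXne : X.Nonempty := nonempty_coe_sort.mp hX.nonempty
  have hchain : ∀ c ⊆ 𝒜, IsChain (· ⊆ ·) c → c.Nonempty → ⋃₀ c ∈ 𝒜 := by
    intro c hc𝒜 hc hne
    obtain ⟨A, hA⟩ := hne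
    refine ⟨(hc𝒜 hA).1.trans (subset_sUnion_of_mem hA), ?_, ?_, ?_⟩
    · exact induce_sUnion_connected_of_pairwise_not_disjoint ⟨A, hA⟩
        (fun hB hC => hXne.mono (subset_inter (hc𝒜 hB).1 (hc𝒜 hC).1)) fun hB => (hc𝒜 hB).2.1
    · exact disjoint_sUnion_left.mpr fun B hB => (hc𝒜 hB).2.2.1
    · exact encard_edgeBoundary_sUnion_le hc ⟨A, hA⟩ fun B hB => (hc𝒜 hB).2.2.2
  obtain ⟨A₀, hA₀⟩ := hG.exists_superset hXY hX hY
  obtain ⟨M, -, hM⟩ := zorn_subset_nonempty 𝒜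
    (fun c hc𝒜 hc hne => ⟨⋃₀ c, hchain c hc𝒜 hc hne, fun _ => subset_sUnion_of_mem⟩) A₀ hA₀
  obtain ⟨hXM, hMconn, hMY, hMbd⟩ := hM.prop
  refine ⟨M, hXM, hMY, hMbd, fun i hi => ?_⟩
  set M' := M ∪ ⋃ j : {j // (t j ∩ M).Nonempty}, t j
  have hM'conn : ConnSet G M' := hMconn.union_iUnion (fun j => ht j) fun j => j.2
  have hM'Y : Disjoint M' Y := by
    refine disjoint_union_left.mpr ⟨hMY, disjoint_iUnion_left.mpr fun j => ?_⟩
    refine (htY j).resolve_right fun hjY => ?_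
    obtain ⟨v, hvj, hvM⟩ := j.2
    exact disjoint_left.mp hMY hvM (hjY hvj)
  obtain ⟨A, hM'A, hA⟩ := hG.exists_superset hM'Y hM'conn hY
  have hMA : M ⊆ A := subset_union_left.trans hM'A
  have hAM : A ⊆ M := hM.2 ⟨hXM.trans hMA, hA⟩ hMA
  exact (subset_iUnion (fun j : {j // (t j ∩ M).Nonempty} => t j) ⟨i, hi⟩).trans
    (subset_union_right.trans (hM'A.trans hAM))

end Bottleneck

section Minor

variable {G : SimpleGraph V} {W : Type} {H : SimpleGraph W} {B : W → Set V}

lemma isMinor_refl : IsMinor G G :=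
  ⟨fun v => {v}, fun v => singleton_nonempty v, connSet_singleton,
    fun _ _ h => disjoint_singleton.mpr h, fun v w h => ⟨v, rfl, w, rfl, h⟩⟩

lemma encard_edgeBoundary_branchSets_le (hdisj : ∀ w w', w ≠ w' → Disjoint (B w) (B w'))
    (hadj : ∀ ⦃w w'⦄, H.Adj w w' → ∃ u ∈ B w, ∃ v ∈ B w', G.Adj u v) {A : Set V}
    (hsat : ∀ w, (B w ∩ A).Nonempty → B w ⊆ A) :
    (H.edgeBoundary {w | B w ⊆ A}).encard ≤ (G.edgeBoundary A).encard := by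
  rcases isEmpty_or_nonempty W with _ | _
  · simp [eq_empty_of_isEmpty (H.edgeBoundary _)]
  let branch : V → W := fun v => Classical.epsilon fun w => v ∈ B w
  have hbranch : ∀ {v w}, v ∈ B w → branch v = w := fun {v w} hv => by
    by_contra hne
    exact disjoint_left.mp (hdisj _ _ hne) (Classical.epsilon_spec (p := (v ∈ B ·)) ⟨w, hv⟩) hv
  calc (H.edgeBoundary {w | B w ⊆ A}).encard
      ≤ (Sym2.map branch '' G.edgeBoundary A).encard := by
        refine encard_le_encard ?_
        rintro _ ⟨w, hw, w', hw', hww', rfl⟩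
        obtain ⟨u, hu, v, hv, huv⟩ := hadj hww'
        refine ⟨s(u, v), mk_mem_edgeBoundary huv (hw hu) fun hvA => hw' (hsat w' ⟨v, hv, hvA⟩), ?_⟩
        rw [Sym2.map_mk, hbranch hu, hbranch hv]
    _ ≤ (G.edgeBoundary A).encard := encard_image_le _ _

theorem EdgeBottlenecked.of_isMinor {n : ℕ} (hG : EdgeBottlenecked G n) (hH : IsMinor G H) :
    EdgeBottlenecked H n := by
  obtain ⟨B, -, hBconn, hBdisj, hBadj⟩ := hH
  refine .of_forall_exists_edgeBoundary fun X Y hXY hX hY => ?_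
  set Y' := ⋃ y ∈ Y, B y
  have hdisjY' : ∀ w ∉ Y, Disjoint (B w) Y' := fun w hw => disjoint_iUnion₂_right.mpr
    fun y hy => hBdisj w y (ne_of_mem_of_not_mem hy hw).symm
  have hX'Y' : Disjoint (⋃ x ∈ X, B x) Y' :=
    disjoint_iUnion₂_left.mpr fun x hx => hdisjY' x (disjoint_left.mp hXY hx)
  have hBY' : ∀ w, Disjoint (B w) Y' ∨ B w ⊆ Y' := fun w =>
    (em (w ∈ Y)).symm.imp (hdisjY' w) fun hw => subset_biUnion_of_mem hw
  obtain ⟨A, hXA, hAY, hA, hsat⟩ := hG.exists_saturated_superset hBconn hBY' hX'Y'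
    (.biUnion_of_branchSets hBconn hBadj hX) (.biUnion_of_branchSets hBconn hBadj hY)
  refine ⟨{w | B w ⊆ A}, fun x hx => (subset_biUnion_of_mem hx).trans hXA, ?_,
    (encard_edgeBoundary_branchSets_le hBdisj hBadj hsat).trans hA⟩
  refine disjoint_right.mpr fun y hy hyA => ?_
  obtain ⟨⟨v, hv⟩⟩ := (hBconn y).nonempty
  exact disjoint_left.mp hAY (hyA hv) (mem_biUnion hy hv)

end Minor

/-- For every `n`, a graph `G` is `n`-edge bottlenecked iff every minor of `G`
is `n`-edge bottlenecked. -/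
theorem bottlenecked_iff_minors_bottlenecked (G : SimpleGraph V) (n : ℕ) :
    EdgeBottlenecked G n ↔
      ∀ (W : Type) (H : SimpleGraph W), IsMinor G H → EdgeBottlenecked H n :=
  ⟨fun hG _ _ hH => hG.of_isMinor hH, fun h => h V G isMinor_refl⟩
end

section
/- If a graph G contains D_{n+1} as an asymptotic minor, then G is not coarsely n-bottlenecked. -/
/-
Take an `M`-fat bottleneck and a `2M`-fat `(n+1)`-ladder. Each rung is a path between the two
poles, so it passes within distance `< M` of one of the at most `n` bottleneck vertices; by
pigeonhole two distinct rungs pass near the same vertex `s`, and the triangle inequality through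
`s` puts them at distance `< 2M`, contradicting fatness.
-/

open SimpleGraph

variable {V : Type}

theorem MDisjoint.mono {G : SimpleGraph V} {M N : ℕ} {X Y : Set V} (hMN : M ≤ N)
    (h : MDisjoint G N X Y) : MDisjoint G M X Y :=
  fun x hx y hy => hMN.trans (h x hx y hy)

theorem SimpleGraph.Connected.dist_lt_add_of_dist_lt {G : SimpleGraph V} (hG : G.Connected)
    {u v s : V} {M : ℕ} (hu : G.dist u s < M) (hv : G.dist v s < M) : G.dist u v < M + M :=
  calc G.dist u v ≤ G.dist u s + G.dist s v := hG.dist_triangle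
    _ < M + M := by rw [G.dist_comm] at hv; omega

theorem FatLadder.card_le_of_forall_rung_near {G : SimpleGraph V} (hG : G.Connected) {M k : ℕ}
    (L : FatLadder G (M + M) k) (S : Finset V)
    (hS : ∀ i, ∃ v ∈ (L.p i).support, ∃ s ∈ S, G.dist v s < M) : k ≤ S.card := by
  choose v hv s hs hd using hS
  have hinj : Function.Injective s := by
    intro i j hij
    by_contra hne
    exact (L.rungsFat i j hne (v i) (v j) (hv i) (hv j)).not_gt
      (hG.dist_lt_add_of_dist_lt (hd i) (hij ▸ hd j))
  simpa using Finset.card_le_card_of_injOn (s := Finset.univ) s (fun i _ => hs i) hinj.injOn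

/-- If a connected graph contains `D_{n+1}` as an asymptotic minor (an `M`-fat
`(n+1)`-ladder for every `M`), then it is not coarsely `n`-bottlenecked. -/
theorem asymptoticDipole_not_coarselyBottlenecked (G : SimpleGraph V)
    (hG : G.Connected) (n : ℕ) (h : ∀ M, Nonempty (FatLadder G M (n + 1))) :
    ¬ ∃ M, FatBottlenecked G M n := by
  rintro ⟨M, hB⟩
  obtain ⟨L⟩ := h (M + M)
  obtain ⟨S, hScard, -, hS⟩ :=
    hB L.X L.Y L.connX L.connY (L.polesFat.mono (Nat.le_add_right M M))
  have hrungs := L.card_le_of_forall_rung_near hG S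
    fun i => hS (L.p i) (L.ha i) (L.hb i) (L.isPath i)
  omega
end
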